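/- Let m ≥ 1, r ∈ ℤ_{≥0}, α_0 ∈ ℂ, λ_0, λ_1,…,λ_m, α_1,…,α_m ∈ ℂ* with λ_0,…,λ_m pairwise distinct, and let V be an infinite-dimensional irreducible L̄_r-module. Then for every k ∈ ℤ the operator L_k is not locally nilpotent on M(V,Ω(λ_0,α_0)) ⊗ ⊗_{i=1}^m Ω(λ_i,α_i); consequently this Virasoro module is not isomorphic to any irreducible Virasoro module M for which there exists R ∈ ℤ_{≥0} such that the action of L_k on M is locally nilpotent for all k ≥ R. -/

import Mathlib

open TensorProduct

/-- Substitution `X_i ↦ X_i - k` (in the variable `i` only) on `ℂ[X_0,…,X_{N-1}]`. -/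
noncomputable def shiftVar {N : ℕ} (i : Fin N) (k : ℂ) :
    MvPolynomial (Fin N) ℂ →ₗ[ℂ] MvPolynomial (Fin N) ℂ :=
  (MvPolynomial.aeval fun j =>
    MvPolynomial.X j - if j = i then MvPolynomial.C k else 0).toLinearMap

/-- The operator `L_k` on `⊗_i Ω(λ_i,α_i) = ℂ[X_0,…,X_{N-1}]`. -/
noncomputable def omegaOp {N : ℕ} (lam al : Fin N → ℂ) (k : ℤ) :
    MvPolynomial (Fin N) ℂ →ₗ[ℂ] MvPolynomial (Fin N) ℂ :=
  ∑ i : Fin N, (lam i ^ k) •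
    ((LinearMap.mulLeft ℂ (MvPolynomial.X i - MvPolynomial.C ((k : ℂ) * al i))).comp
      (shiftVar i (k : ℂ)))

/-- The operator `L_k` on `M(V,Ω(λ_0,α_0)) ⊗ ⊗_{i=1}^m Ω(λ_i,α_i) = V ⊗ ℂ[X_0,…,X_m]`. -/
noncomputable def MOp {V : Type*} [AddCommGroup V] [Module ℂ V]
    (B : ℕ → V →ₗ[ℂ] V) (r : ℕ) {m : ℕ} (lam al : Fin (m + 1) → ℂ) (k : ℤ) :
    V ⊗[ℂ] MvPolynomial (Fin (m + 1)) ℂ →ₗ[ℂ] V ⊗[ℂ] MvPolynomial (Fin (m + 1)) ℂ :=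
  TensorProduct.map LinearMap.id (omegaOp lam al k) +
  ∑ j ∈ Finset.range (r + 1),
    (((k : ℂ) ^ (j + 1)) / ((j + 1).factorial : ℂ)) •
      TensorProduct.map (B j) ((lam 0 ^ k) • shiftVar 0 (k : ℂ))

/-!
Filter `V ⊗ ℂ[X_0,…,X_m]` by the degree in `X_0`. Each `L_k` raises this degree by at most one,
and on the part of `X_0`-degree `≤ N` the `X_0^{N+1}`-coefficient of `L_k w` is `λ_0^k` times the
`X_0^N`-coefficient of `w`: the terms with `i ≠ 0` and the `L̄_r`-terms do not raise the
`X_0`-degree, and the shift `X_0 ↦ X_0 - k` is a Taylor shift in `X_0` over `ℂ[X_1,…,X_m]`, which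
fixes the top coefficient. So the `X_0^N`-coefficient of `L_k^N (v ⊗ 1)` is `λ_0^{kN} v ≠ 0`. An
isomorphism transports local nilpotency of `L_R` from `M`, which gives the second claim.
-/

namespace Polynomial

theorem coeff_taylor_of_natDegree_le {R : Type*} [CommSemiring R] {f : R[X]} {N : ℕ} (r : R)
    (h : f.natDegree ≤ N) : (taylor r f).coeff N = f.coeff N := by
  rcases h.lt_or_eq with h | rfl
  · rw [coeff_eq_zero_of_natDegree_lt h,
      coeff_eq_zero_of_natDegree_lt (by rwa [natDegree_taylor])]
  · exact coeff_taylor_natDegree r f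

end Polynomial

namespace MvPolynomial

theorem coeff_eq_zero_of_degreeOf_lt {σ R : Type*} [CommSemiring R] {p : MvPolynomial σ R}
    {s : σ →₀ ℕ} {i : σ} (h : degreeOf i p < s i) : coeff s p = 0 := by
  by_contra hs
  exact (monomial_le_degreeOf i (mem_support_iff.2 hs)).not_gt h

theorem degreeOf_X_sub_C_le {σ R : Type*} [CommRing R] (i j : σ) (c : R) :
    degreeOf i (X j - C c) ≤ 1 := by
  classical
  rcases subsingleton_or_nontrivial R with _ | _
  · simp [Subsingleton.elim (X j - C c) 0]
  refine (degreeOf_sub_le _ _ _).trans (max_le ?_ (by simp [degreeOf_C]))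
  rw [degreeOf_X]
  split_ifs <;> simp

variable {n : ℕ}

theorem finSuccEquiv_shiftVar_zero (k : ℂ) (p : MvPolynomial (Fin (n + 1)) ℂ) :
    finSuccEquiv ℂ n (shiftVar 0 k p) = Polynomial.taylor (-C k) (finSuccEquiv ℂ n p) := by
  suffices h : (finSuccEquiv ℂ n).toAlgHom.comp
      (aeval fun j => X j - if j = 0 then C k else 0) =
      ((Polynomial.taylorAlgHom (-C k : MvPolynomial (Fin n) ℂ)).restrictScalars ℂ).comp
        (finSuccEquiv ℂ n).toAlgHom from
    DFunLike.congr_fun h p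
  ext j : 1
  cases j using Fin.cases <;> simp [finSuccEquiv_apply, Fin.succ_ne_zero, sub_eq_add_neg]

theorem finSuccEquiv_shiftVar_succ (j : Fin n) (k : ℂ) (p : MvPolynomial (Fin (n + 1)) ℂ) :
    finSuccEquiv ℂ n (shiftVar j.succ k p) =
      (finSuccEquiv ℂ n p).map (aeval fun l => X l - if l = j then C k else 0 :
        MvPolynomial (Fin n) ℂ →ₐ[ℂ] MvPolynomial (Fin n) ℂ).toRingHom := by
  suffices h : (finSuccEquiv ℂ n).toAlgHom.comp
      (aeval fun l => X l - if l = j.succ then C k else 0) =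
      (Polynomial.mapAlgHom (aeval fun l => X l - if l = j then C k else 0)).comp
        (finSuccEquiv ℂ n).toAlgHom from
    DFunLike.congr_fun h p
  ext l : 1
  cases l using Fin.cases with
  | zero => simp [finSuccEquiv_X_zero, (Fin.succ_ne_zero _).symm]
  | succ l => by_cases h : l = j <;> simp [finSuccEquiv_apply, h]

theorem degreeOf_zero_shiftVar_le (i : Fin (n + 1)) (k : ℂ) (p : MvPolynomial (Fin (n + 1)) ℂ) :
    degreeOf 0 (shiftVar i k p) ≤ degreeOf 0 p := by
  rw [← natDegree_finSuccEquiv, ← natDegree_finSuccEquiv]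
  cases i using Fin.cases with
  | zero => rw [finSuccEquiv_shiftVar_zero, Polynomial.natDegree_taylor]
  | succ j => rw [finSuccEquiv_shiftVar_succ]; exact Polynomial.natDegree_map_le

theorem coeff_cons_shiftVar_zero {N : ℕ} (m : Fin n →₀ ℕ) (k : ℂ)
    {p : MvPolynomial (Fin (n + 1)) ℂ} (hp : degreeOf 0 p ≤ N) :
    coeff (m.cons N) (shiftVar 0 k p) = coeff (m.cons N) p := by
  rw [← natDegree_finSuccEquiv] at hp
  rw [← finSuccEquiv_coeff_coeff, ← finSuccEquiv_coeff_coeff, finSuccEquiv_shiftVar_zero,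
    Polynomial.coeff_taylor_of_natDegree_le _ hp]

end MvPolynomial

open MvPolynomial

section omegaOp

variable {n : ℕ} (lam al : Fin (n + 1) → ℂ) (k : ℤ)

theorem omegaOp_apply (p : MvPolynomial (Fin (n + 1)) ℂ) :
    omegaOp lam al k p =
      ∑ i, C (lam i ^ k) * ((X i - C ((k : ℂ) * al i)) * shiftVar i (k : ℂ) p) := by
  simp [omegaOp, LinearMap.sum_apply, smul_eq_C_mul]

theorem degreeOf_zero_omegaOp_le (p : MvPolynomial (Fin (n + 1)) ℂ) :
    degreeOf 0 (omegaOp lam al k p) ≤ degreeOf 0 p + 1 := by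
  rw [omegaOp_apply]
  refine (degreeOf_sum_le _ _ _).trans (Finset.sup_le fun i _ => ?_)
  refine (degreeOf_C_mul_le _ _ _).trans ((degreeOf_mul_le _ _ _).trans ?_)
  have := degreeOf_zero_shiftVar_le i (k : ℂ) p
  have := degreeOf_X_sub_C_le 0 i ((k : ℂ) * al i)
  omega

theorem coeff_single_zero_omegaOp {N : ℕ} {p : MvPolynomial (Fin (n + 1)) ℂ}
    (hp : degreeOf 0 p ≤ N) :
    coeff (Finsupp.single 0 (N + 1)) (omegaOp lam al k p) =
      lam 0 ^ k * coeff (Finsupp.single 0 N) p := by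
  have hterm (i : Fin (n + 1)) :
      coeff (Finsupp.single 0 (N + 1)) ((X i - C ((k : ℂ) * al i)) * shiftVar i (k : ℂ) p) =
        if i = 0 then coeff (Finsupp.single 0 N) p else 0 := by
    have hlow : coeff (Finsupp.single 0 (N + 1)) (shiftVar i (k : ℂ) p) = 0 :=
      coeff_eq_zero_of_degreeOf_lt (i := 0) <| by
        simpa using Nat.lt_succ_of_le ((degreeOf_zero_shiftVar_le i _ p).trans hp)
    rw [sub_mul, coeff_sub, coeff_C_mul, hlow, mul_zero, sub_zero, coeff_X_mul']
    rcases eq_or_ne i 0 with rfl | hi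
    · rw [if_pos (by simp), if_pos rfl, ← Finsupp.single_tsub, Nat.add_sub_cancel,
        ← Finsupp.cons_zero_eq_single_zero, coeff_cons_shiftVar_zero 0 _ hp]
    · rw [if_neg (by simp [hi]), if_neg hi]
  simp only [omegaOp_apply, coeff_sum, coeff_C_mul, hterm, mul_ite, mul_zero,
    Finset.sum_ite_eq', Finset.mem_univ, if_true]

end omegaOp

noncomputable def tensorDegreeOfLE (V : Type*) [AddCommGroup V] [Module ℂ V] (n N : ℕ) :
    Submodule ℂ (V ⊗[ℂ] MvPolynomial (Fin (n + 1)) ℂ) :=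
  Submodule.span ℂ
    {w | ∃ (u : V) (q : MvPolynomial (Fin (n + 1)) ℂ), degreeOf 0 q ≤ N ∧ w = u ⊗ₜ q}

noncomputable def coeffXZeroPow (V : Type*) [AddCommGroup V] [Module ℂ V] (n N : ℕ) :
    V ⊗[ℂ] MvPolynomial (Fin (n + 1)) ℂ →ₗ[ℂ] V :=
  (TensorProduct.rid ℂ V).toLinearMap ∘ₗ (lcoeff ℂ (Finsupp.single 0 N)).lTensor V

section MOp

variable {V : Type*} [AddCommGroup V] [Module ℂ V] {n : ℕ}

theorem tmul_mem_tensorDegreeOfLE (u : V) {N : ℕ} {q : MvPolynomial (Fin (n + 1)) ℂ}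
    (hq : degreeOf 0 q ≤ N) : u ⊗ₜ q ∈ tensorDegreeOfLE V n N :=
  Submodule.subset_span ⟨u, q, hq, rfl⟩

@[simp]
theorem coeffXZeroPow_tmul (N : ℕ) (u : V) (q : MvPolynomial (Fin (n + 1)) ℂ) :
    coeffXZeroPow V n N (u ⊗ₜ q) = coeff (Finsupp.single 0 N) q • u := by
  simp [coeffXZeroPow]

variable (B : ℕ → V →ₗ[ℂ] V) (r : ℕ) (lam al : Fin (n + 1) → ℂ) (k : ℤ)

theorem MOp_tmul (u : V) (p : MvPolynomial (Fin (n + 1)) ℂ) :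
    MOp B r lam al k (u ⊗ₜ p) = u ⊗ₜ omegaOp lam al k p +
      ∑ j ∈ Finset.range (r + 1), ((k : ℂ) ^ (j + 1) / (j + 1).factorial) •
        (B j u ⊗ₜ (lam 0 ^ k • shiftVar 0 (k : ℂ) p)) := by
  simp [MOp, LinearMap.sum_apply]

theorem MOp_mem_tensorDegreeOfLE {N : ℕ} {w : V ⊗[ℂ] MvPolynomial (Fin (n + 1)) ℂ}
    (hw : w ∈ tensorDegreeOfLE V n N) : MOp B r lam al k w ∈ tensorDegreeOfLE V n (N + 1) := by
  induction hw using Submodule.span_induction with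
  | mem x hx =>
    obtain ⟨u, q, hq, rfl⟩ := hx
    rw [MOp_tmul]
    refine add_mem (tmul_mem_tensorDegreeOfLE u ((degreeOf_zero_omegaOp_le lam al k q).trans
      (by omega))) (Submodule.sum_mem _ fun j _ => Submodule.smul_mem _ _ ?_)
    refine tmul_mem_tensorDegreeOfLE _ ?_
    rw [smul_eq_C_mul]
    exact (degreeOf_C_mul_le _ _ _).trans ((degreeOf_zero_shiftVar_le 0 _ q).trans (by omega))
  | zero => simp
  | add x y _ _ hx hy => simpa using add_mem hx hy
  | smul a x _ hx => simpa using Submodule.smul_mem _ a hx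

theorem coeffXZeroPow_MOp {N : ℕ} {w : V ⊗[ℂ] MvPolynomial (Fin (n + 1)) ℂ}
    (hw : w ∈ tensorDegreeOfLE V n N) :
    coeffXZeroPow V n (N + 1) (MOp B r lam al k w) = lam 0 ^ k • coeffXZeroPow V n N w := by
  induction hw using Submodule.span_induction with
  | mem x hx =>
    obtain ⟨u, q, hq, rfl⟩ := hx
    have hB : coeff (Finsupp.single 0 (N + 1)) (lam 0 ^ k • shiftVar 0 (k : ℂ) q) = 0 := by
      rw [coeff_smul, coeff_eq_zero_of_degreeOf_lt (i := 0), smul_zero]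
      simpa using Nat.lt_succ_of_le ((degreeOf_zero_shiftVar_le 0 _ q).trans hq)
    rw [MOp_tmul, map_add, map_sum, Finset.sum_eq_zero fun j _ => by
        rw [map_smul, coeffXZeroPow_tmul, hB, zero_smul, smul_zero],
      add_zero, coeffXZeroPow_tmul, coeffXZeroPow_tmul, coeff_single_zero_omegaOp lam al k hq,
      mul_smul]
  | zero => simp
  | add x y _ _ hx hy => simp [hx, hy]
  | smul a x _ hx => simp [hx, smul_comm a]

theorem MOp_iterate_tmul_one_ne_zero {v : V} (hv : v ≠ 0) (hlam : lam 0 ≠ 0) (N : ℕ) :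
    (MOp B r lam al k)^[N] (v ⊗ₜ 1) ≠ 0 := by
  have invariant : ∀ N, (MOp B r lam al k)^[N] (v ⊗ₜ 1) ∈ tensorDegreeOfLE V n N ∧
      coeffXZeroPow V n N ((MOp B r lam al k)^[N] (v ⊗ₜ 1)) = (lam 0 ^ k) ^ N • v := by
    intro N
    induction N with
    | zero => exact ⟨tmul_mem_tensorDegreeOfLE v (by simp), by simp⟩
    | succ N ih =>
      rw [Function.iterate_succ_apply']
      exact ⟨MOp_mem_tensorDegreeOfLE B r lam al k ih.1,
        by rw [coeffXZeroPow_MOp B r lam al k ih.1, ih.2, pow_succ', mul_smul]⟩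
  intro h
  have := (invariant N).2
  rw [h, map_zero] at this
  exact smul_ne_zero (pow_ne_zero N (zpow_ne_zero k hlam)) hv this.symm

end MOp

theorem iterate_eq_zero_of_semiconj {R M M' : Type*} [Semiring R] [AddCommMonoid M]
    [AddCommMonoid M'] [Module R M] [Module R M'] (φ : M ≃ₗ[R] M') {f : M → M} {g : M' → M'}
    (h : Function.Semiconj φ f g) {x : M} {N : ℕ} (hN : g^[N] (φ x) = 0) : f^[N] x = 0 :=
  φ.injective (by rw [h.iterate_right N x, hN, map_zero])

theorem statement17_general {V : Type*} [AddCommGroup V] [Module ℂ V]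
    (m r : ℕ)
    (lam al : Fin (m + 1) → ℂ)
    (hlam : ∀ i, lam i ≠ 0)
    (B : ℕ → V →ₗ[ℂ] V)
    (hVne : ∃ v : V, v ≠ 0) :
    (∀ k : ℤ, ¬ ∀ w : V ⊗[ℂ] MvPolynomial (Fin (m + 1)) ℂ,
        ∃ N : ℕ, (⇑(MOp B r lam al k))^[N] w = 0) ∧
    (∀ (M : Type) (_ : AddCommGroup M) (_ : Module ℂ M)
        (T : ℤ → M →ₗ[ℂ] M) (c : ℂ),
      (∀ a b : ℤ, T a ∘ₗ T b - T b ∘ₗ T a =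
        ((((b : ℂ) - (a : ℂ)) • T (a + b) : M →ₗ[ℂ] M) +
          (if a + b = 0 then (((a : ℂ) ^ 3 - (a : ℂ)) / 12) * c else 0) •
            LinearMap.id)) →
      (∃ w : M, w ≠ 0) →
      (∀ U : Submodule ℂ M, (∀ k : ℤ, ∀ w ∈ U, T k w ∈ U) → U = ⊥ ∨ U = ⊤) →
      (∃ R : ℕ, ∀ k : ℤ, (R : ℤ) ≤ k → ∀ w : M, ∃ N : ℕ, (⇑(T k))^[N] w = 0) →
      ¬ ∃ φ : (V ⊗[ℂ] MvPolynomial (Fin (m + 1)) ℂ) ≃ₗ[ℂ] M,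
          ∀ (k : ℤ) (x : V ⊗[ℂ] MvPolynomial (Fin (m + 1)) ℂ),
            φ (MOp B r lam al k x) = T k (φ x)) := by
  obtain ⟨v, hv⟩ := hVne
  have not_nilpotent (k : ℤ) (hnil : ∀ w, ∃ N : ℕ, (⇑(MOp B r lam al k))^[N] w = 0) : False := by
    obtain ⟨N, hN⟩ := hnil (v ⊗ₜ 1)
    exact MOp_iterate_tmul_one_ne_zero B r lam al k hv (hlam 0) N hN
  refine ⟨not_nilpotent, ?_⟩
  rintro M _ _ T c - - - ⟨R, hR⟩ ⟨φ, hφ⟩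
  refine not_nilpotent R fun w => ?_
  obtain ⟨N, hN⟩ := hR R le_rfl (φ w)
  exact ⟨N, iterate_eq_zero_of_semiconj φ (hφ R) hN⟩

/-- **Proposition 5.3 (last part).** Let `m ≥ 1`, `r ∈ ℤ_{≥0}`, `α_0 ∈ ℂ`,
`λ_0,…,λ_m, α_1,…,α_m ∈ ℂ*` with `λ_0,…,λ_m` pairwise distinct, and `V` an
infinite-dimensional irreducible `L̄_r`-module. Then no `L_k` acts locally
nilpotently on `M(V,Ω(λ_0,α_0)) ⊗ ⊗_{i=1}^m Ω(λ_i,α_i)`, and consequently this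
module is not isomorphic to any irreducible Virasoro module `M` on which the
operators `L_k` act locally nilpotently for all `k ≥ R`. -/
theorem statement17 {V : Type*} [AddCommGroup V] [Module ℂ V]
    (m r : ℕ) (hm : 1 ≤ m)
    (lam al : Fin (m + 1) → ℂ)
    (hlam : ∀ i, lam i ≠ 0) (hlaminj : Function.Injective lam)
    (hal : ∀ i, i ≠ 0 → al i ≠ 0)
    (B : ℕ → V →ₗ[ℂ] V)
    (hBtop : ∀ i, r < i → B i = 0)
    (hBrel : ∀ i j, i ≤ r → j ≤ r →
      B i ∘ₗ B j - B j ∘ₗ B i = (((j : ℂ) - (i : ℂ)) • B (i + j) : V →ₗ[ℂ] V))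
    (hVne : ∃ v : V, v ≠ 0)
    (hVirr : ∀ U : Submodule ℂ V, (∀ i, i ≤ r → ∀ w ∈ U, B i w ∈ U) → U = ⊥ ∨ U = ⊤)
    (hVinf : ¬ Module.Finite ℂ V) :
    (∀ k : ℤ, ¬ ∀ w : V ⊗[ℂ] MvPolynomial (Fin (m + 1)) ℂ,
        ∃ N : ℕ, (⇑(MOp B r lam al k))^[N] w = 0) ∧
    (∀ (M : Type) (_ : AddCommGroup M) (_ : Module ℂ M)
        (T : ℤ → M →ₗ[ℂ] M) (c : ℂ),
      (∀ a b : ℤ, T a ∘ₗ T b - T b ∘ₗ T a =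
        ((((b : ℂ) - (a : ℂ)) • T (a + b) : M →ₗ[ℂ] M) +
          (if a + b = 0 then (((a : ℂ) ^ 3 - (a : ℂ)) / 12) * c else 0) •
            LinearMap.id)) →
      (∃ w : M, w ≠ 0) →
      (∀ U : Submodule ℂ M, (∀ k : ℤ, ∀ w ∈ U, T k w ∈ U) → U = ⊥ ∨ U = ⊤) →
      (∃ R : ℕ, ∀ k : ℤ, (R : ℤ) ≤ k → ∀ w : M, ∃ N : ℕ, (⇑(T k))^[N] w = 0) →
      ¬ ∃ φ : (V ⊗[ℂ] MvPolynomial (Fin (m + 1)) ℂ) ≃ₗ[ℂ] M,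
          ∀ (k : ℤ) (x : V ⊗[ℂ] MvPolynomial (Fin (m + 1)) ℂ),
            φ (MOp B r lam al k x) = T k (φ x)) :=
  statement17_general m r lam al hlam B hVne
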